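/- arXiv:1807.02423 — 9 statements merged into one kernel-verified Lean document; each statement's English description precedes it below -/
import Mathlib

section
/- Let H and G be Hilbert algebras and let f : H → G be a function. Then the following are equivalent: (1) f(1) = 1 and f(a→b) ≤ f(a)→f(b) for all a,b ∈ H (where ≤ is the natural order of G); (2) f⁻¹(F) is an implicative filter of H for every implicative filter F of G. -/
/-- A Hilbert algebra `(H, →, 1)`. -/
structure HilbertAlgebra (H : Type*) where
  imp : H → H → H
  one : H
  ax1 : ∀ a b : H, imp a (imp b a) = one
  ax2 : ∀ a b c : H, imp (imp a (imp b c)) (imp (imp a b) (imp a c)) = one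
  ax3 : ∀ a b : H, imp a b = one → imp b a = one → a = b

namespace HilbertAlgebra

variable {H : Type*} (hH : HilbertAlgebra H)

/-- The natural order: `a ≤ b` iff `a → b = 1`. -/
def le (a b : H) : Prop := hH.imp a b = hH.one

/-- Implicative filter. -/
def IsImplicativeFilter (F : Set H) : Prop :=
  hH.one ∈ F ∧ ∀ a b : H, a ∈ F → hH.imp a b ∈ F → b ∈ F

/-- Irreducible implicative filter. -/
def IsIrreducible (F : Set H) : Prop :=
  hH.IsImplicativeFilter F ∧ F ≠ Set.univ ∧
    ∀ F₁ F₂ : Set H, hH.IsImplicativeFilter F₁ → hH.IsImplicativeFilter F₂ →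
      F = F₁ ∩ F₂ → (F = F₁ ∨ F = F₂)

/-- Order-ideal: nonempty, downward closed, up-directed (w.r.t. the natural order). -/
def IsOrderIdeal (I : Set H) : Prop :=
  I.Nonempty ∧ (∀ a b : H, b ∈ I → hH.le a b → a ∈ I) ∧
    ∀ a b : H, a ∈ I → b ∈ I → ∃ c ∈ I, hH.le a c ∧ hH.le b c

/-- `φ(a) = {P ∈ X(H) : a ∈ P}`. -/
def phi (a : H) : Set (Set H) := {P | hH.IsIrreducible P ∧ a ∈ P}

/-- An upset of `X(H)` (the poset of irreducible implicative filters, ordered by `⊆`). -/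
def IsUpsetX (U : Set (Set H)) : Prop :=
  (∀ P ∈ U, hH.IsIrreducible P) ∧
    ∀ P Q : Set H, P ∈ U → hH.IsIrreducible Q → P ⊆ Q → Q ∈ U

/-- The Heyting implication `U ⇒ V` on upsets of `X(H)`. -/
def impUps (U V : Set (Set H)) : Set (Set H) :=
  {P | hH.IsIrreducible P ∧ ∀ Q : Set H, hH.IsIrreducible Q → P ⊆ Q → Q ∈ U → Q ∈ V}

/-- `FC(H)`: finite nonempty intersections of sets of the form `φ(a)`. -/
def FC : Set (Set (Set H)) :=
  {U | ∃ l : List H, l ≠ [] ∧ U = ⋂ a ∈ l, hH.phi a}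

/-- `X*(H)`: implicative filters that are intersections of finitely many (at least one)
irreducible implicative filters. -/
def XStar : Set (Set H) :=
  {F | ∃ S : Set (Set H), S.Finite ∧ S.Nonempty ∧ (∀ P ∈ S, hH.IsIrreducible P) ∧ F = ⋂₀ S}

/-- `Φ(a) = {F ∈ X*(H) : a ∈ F}`. -/
def Phi (a : H) : Set (Set H) := {F | F ∈ hH.XStar ∧ a ∈ F}

/-- An upset of `X*(H)` (ordered by `⊆`). -/
def IsUpsetXStar (U : Set (Set H)) : Prop :=
  (∀ F ∈ U, F ∈ hH.XStar) ∧
    ∀ F K : Set H, F ∈ U → K ∈ hH.XStar → F ⊆ K → K ∈ U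

/-- The implication `U ⇒ V` on upsets of `X*(H)`. -/
def impUpsStar (U V : Set (Set H)) : Set (Set H) :=
  {F | F ∈ hH.XStar ∧ ∀ K : Set H, K ∈ hH.XStar → F ⊆ K → K ∈ U → K ∈ V}

/-- Homomorphism of Hilbert algebras. -/
def IsHom {G : Type*} (hG : HilbertAlgebra G) (f : H → G) : Prop :=
  f hH.one = hG.one ∧ ∀ a b : H, f (hH.imp a b) = hG.imp (f a) (f b)

end HilbertAlgebra

/-- A Hilbert algebra with supremum: `(H, ∨)` is a join-semilattice whose induced
order has greatest element `1`, and `a → b = 1` iff `a ∨ b = b`. -/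
structure HilbertSup (H : Type*) extends HilbertAlgebra H where
  sup : H → H → H
  sup_comm : ∀ a b : H, sup a b = sup b a
  sup_assoc : ∀ a b c : H, sup (sup a b) c = sup a (sup b c)
  sup_idem : ∀ a : H, sup a a = a
  sup_one : ∀ a : H, sup a one = one
  imp_eq_one_iff : ∀ a b : H, imp a b = one ↔ sup a b = b

/-- Morphism of Hilbert algebras with supremum. -/
def HilbertSup.IsHomSup {H G : Type*} (hH : HilbertSup H) (hG : HilbertSup G)
    (f : H → G) : Prop :=
  hH.toHilbertAlgebra.IsHom hG.toHilbertAlgebra f ∧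
    ∀ a b : H, f (hH.sup a b) = hG.sup (f a) (f b)

/-- An implicative semilattice: a meet-semilattice with greatest element and a binary
operation `him` such that `a ⊓ b ≤ c ↔ a ≤ him b c`. -/
class ImplicativeSemilattice (G : Type*) extends SemilatticeInf G, OrderTop G where
  him : G → G → G
  inf_le_iff_le_him : ∀ a b c : G, a ⊓ b ≤ c ↔ a ≤ him b c

namespace HilbertAlgebraAux

variable {H : Type*} (hH : HilbertAlgebra H)

lemma mp1 {a b : H} (h2 : hH.imp a b = hH.one) (h1 : a = hH.one) : b = hH.one := by
  subst h1
  refine hH.ax3 b hH.one ?_ h2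
  calc hH.imp b hH.one = hH.imp b (hH.imp hH.one b) := by rw [h2]
    _ = hH.one := hH.ax1 b hH.one

lemma imp_self (a : H) : hH.imp a a = hH.one := by
  have s := hH.ax2 a (hH.imp a a) a
  have h1 := mp1 hH s (hH.ax1 a (hH.imp a a))
  exact mp1 hH h1 (hH.ax1 a a)

lemma imp_one (a : H) : hH.imp a hH.one = hH.one := by
  calc hH.imp a hH.one = hH.imp a (hH.imp a a) := by rw [imp_self hH a]
    _ = hH.one := hH.ax1 a a

lemma le_mp {u p q : H} (h1 : hH.imp u (hH.imp p q) = hH.one)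
    (h2 : hH.imp u p = hH.one) : hH.imp u q = hH.one :=
  mp1 hH (mp1 hH (hH.ax2 u p q) h1) h2

lemma le_trans {a b c : H} (h1 : hH.imp a b = hH.one) (h2 : hH.imp b c = hH.one) :
    hH.imp a c = hH.one := by
  refine le_mp hH (p := b) ?_ h1
  rw [h2]; exact imp_one hH a

end HilbertAlgebraAux

open HilbertAlgebraAux in
theorem stmt_0 {H G : Type*} (hH : HilbertAlgebra H) (hG : HilbertAlgebra G) (f : H → G) :
    (f hH.one = hG.one ∧ ∀ a b : H, hG.le (f (hH.imp a b)) (hG.imp (f a) (f b))) ↔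
      (∀ F : Set G, hG.IsImplicativeFilter F → hH.IsImplicativeFilter (f ⁻¹' F)) := by
  constructor
  · rintro ⟨h1, h2⟩ F ⟨hF1, hFmp⟩
    constructor
    · simpa [Set.mem_preimage, h1] using hF1
    · intro a b ha hab
      have hle : hG.imp (f (hH.imp a b)) (hG.imp (f a) (f b)) = hG.one := h2 a b
      have himp : hG.imp (f a) (f b) ∈ F := hFmp _ _ hab (hle ▸ hF1)
      exact hFmp _ _ ha himp
  · intro h
    -- first: f 1 = 1
    have hf1 : f hH.one = hG.one := by
      set F : Set G := {x | hG.imp hG.one x = hG.one} with hFdef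
      have hF : hG.IsImplicativeFilter F := by
        constructor
        · exact imp_self hG hG.one
        · intro a b ha hab
          exact le_mp hG hab ha
      have := (h F hF).1
      have hmem : hG.imp hG.one (f hH.one) = hG.one := this
      refine hG.ax3 _ _ (imp_one hG _) hmem
    refine ⟨hf1, ?_⟩
    intro a b
    set u := f (hH.imp a b) with hu
    set F : Set G := {x | hG.imp u (hG.imp (f a) x) = hG.one} with hFdef
    have hF : hG.IsImplicativeFilter F := by
      constructor
      · show hG.imp u (hG.imp (f a) hG.one) = hG.one
        rw [imp_one hG (f a)]; exact imp_one hG u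
      · intro x y hx hxy
        have h1 : hG.imp u (hG.imp (f a) x) = hG.one := hx
        have h2 : hG.imp u (hG.imp (f a) (hG.imp x y)) = hG.one := hxy
        have s : hG.imp (hG.imp (f a) (hG.imp x y))
            (hG.imp (hG.imp (f a) x) (hG.imp (f a) y)) = hG.one := hG.ax2 (f a) x y
        have h3 : hG.imp u (hG.imp (hG.imp (f a) x) (hG.imp (f a) y)) = hG.one :=
          le_trans hG h2 s
        exact le_mp hG h3 h1
    have hpre := h F hF
    have hab_mem : hH.imp a b ∈ f ⁻¹' F := by
      show hG.imp u (hG.imp (f a) u) = hG.one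
      rw [hG.ax1 u (f a)]
    have ha_mem : a ∈ f ⁻¹' F := by
      show hG.imp u (hG.imp (f a) (f a)) = hG.one
      rw [imp_self hG (f a)]; exact imp_one hG u
    have hb_mem : b ∈ f ⁻¹' F := hpre.2 a b ha_mem hab_mem
    exact hb_mem
end

section
/- Let H be a Hilbert algebra, F an implicative filter of H, and I an order-ideal of H such that F ∩ I = ∅. Then there exists an irreducible implicative filter P of H such that F ⊆ P and P ∩ I = ∅. -/
namespace HilbertAlgebra

variable {H : Type*} (hH : HilbertAlgebra H)

lemma mp1 {x : H} (h : hH.imp hH.one x = hH.one) : x = hH.one := by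
  have h2 : hH.imp x (hH.imp hH.one x) = hH.one := hH.ax1 x hH.one
  rw [h] at h2
  exact hH.ax3 x hH.one h2 h

lemma mp {a b : H} (ha : a = hH.one) (hab : hH.imp a b = hH.one) : b = hH.one := by
  rw [ha] at hab; exact hH.mp1 hab

lemma imp_self (a : H) : hH.imp a a = hH.one := by
  have s := hH.ax2 a (hH.imp a a) a
  have k1 := hH.ax1 a (hH.imp a a)
  have h1 := hH.mp k1 s
  exact hH.mp (hH.ax1 a a) h1

lemma imp_one (a : H) : hH.imp a hH.one = hH.one := by
  have k := hH.ax1 hH.one a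
  exact hH.mp1 k

lemma one_imp (a : H) : hH.imp hH.one a = a := by
  refine hH.ax3 _ _ ?_ (hH.ax1 a hH.one)
  have s := hH.ax2 (hH.imp hH.one a) hH.one a
  have h1 : hH.imp (hH.imp hH.one a) (hH.imp hH.one a) = hH.one := hH.imp_self _
  have h2 := hH.mp h1 s
  exact hH.mp (hH.imp_one _) h2

lemma imp_mono {a x c : H} (h : hH.imp x c = hH.one) :
    hH.imp (hH.imp a x) (hH.imp a c) = hH.one := by
  have s := hH.ax2 a x c
  have h1 : hH.imp a (hH.imp x c) = hH.one := by rw [h]; exact hH.imp_one a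
  exact hH.mp h1 s

/-- Membership in a filter via equality with 1. -/
lemma mem_of_eq_one {P : Set H} (hP : hH.IsImplicativeFilter P) {x : H}
    (h : x = hH.one) : x ∈ P := h ▸ hP.1

lemma filter_mp {P : Set H} (hP : hH.IsImplicativeFilter P) {a b : H}
    (ha : a ∈ P) (hab : hH.imp a b ∈ P) : b ∈ P := hP.2 a b ha hab

/-- The filter generated by `P` and `a`. -/
def ext (P : Set H) (a : H) : Set H := {b | hH.imp a b ∈ P}

lemma ext_filter {P : Set H} (hP : hH.IsImplicativeFilter P) (a : H) :
    hH.IsImplicativeFilter (hH.ext P a) := by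
  constructor
  · exact hH.mem_of_eq_one hP (hH.imp_one a)
  · intro x y hx hxy
    have s : hH.imp a (hH.imp x y) ∈ P := hxy
    have s2 : hH.imp (hH.imp a (hH.imp x y)) (hH.imp (hH.imp a x) (hH.imp a y)) ∈ P :=
      hH.mem_of_eq_one hP (hH.ax2 a x y)
    have s3 : hH.imp (hH.imp a x) (hH.imp a y) ∈ P := hH.filter_mp hP s s2
    exact hH.filter_mp hP hx s3

lemma subset_ext {P : Set H} (hP : hH.IsImplicativeFilter P) (a : H) :
    P ⊆ hH.ext P a := by
  intro b hb
  have k : hH.imp b (hH.imp a b) ∈ P := hH.mem_of_eq_one hP (hH.ax1 b a)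
  exact hH.filter_mp hP hb k

lemma self_mem_ext (P : Set H) (hP : hH.IsImplicativeFilter P) (a : H) :
    a ∈ hH.ext P a := hH.mem_of_eq_one hP (hH.imp_self a)

end HilbertAlgebra

theorem stmt_1 {H : Type*} (hH : HilbertAlgebra H) (F I : Set H)
    (hF : hH.IsImplicativeFilter F) (hI : hH.IsOrderIdeal I) (hdisj : F ∩ I = ∅) :
    ∃ P : Set H, hH.IsIrreducible P ∧ F ⊆ P ∧ P ∩ I = ∅ := by
  set S : Set (Set H) := {G | hH.IsImplicativeFilter G ∧ F ⊆ G ∧ G ∩ I = ∅} with hS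
  have hFS : F ∈ S := ⟨hF, subset_rfl, hdisj⟩
  obtain ⟨P, hPS, hFP, hPmax⟩ : ∃ P ∈ S, F ⊆ P ∧ ∀ G ∈ S, P ⊆ G → G = P := by
    obtain ⟨P, hFP, hPmax⟩ := zorn_subset_nonempty S (fun c hcS hchain hcne => by
      obtain ⟨G₀, hG₀⟩ := hcne
      refine ⟨⋃₀ c, ⟨⟨⟨G₀, hG₀, (hcS hG₀).1.1⟩, ?_⟩, ?_, ?_⟩, fun s hs => Set.subset_sUnion_of_mem hs⟩
      · intro a b ha hab
        obtain ⟨G₁, hG₁, haG₁⟩ := ha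
        obtain ⟨G₂, hG₂, habG₂⟩ := hab
        rcases hchain.total hG₁ hG₂ with h | h
        · exact ⟨G₂, hG₂, (hcS hG₂).1.2 a b (h haG₁) habG₂⟩
        · exact ⟨G₁, hG₁, (hcS hG₁).1.2 a b haG₁ (h habG₂)⟩
      · exact (hcS hG₀).2.1.trans (Set.subset_sUnion_of_mem hG₀)
      · rw [Set.eq_empty_iff_forall_notMem]
        rintro x ⟨⟨G, hG, hxG⟩, hxI⟩
        have := (hcS hG).2.2
        rw [Set.eq_empty_iff_forall_notMem] at this
        exact this x ⟨hxG, hxI⟩) F hFS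
    exact ⟨P, hPmax.prop, hFP,
      fun G hG hPG => hPmax.eq_of_ge hG hPG⟩
  obtain ⟨hPfil, hFP', hPI⟩ := hPS
  refine ⟨P, ⟨hPfil, ?_, ?_⟩, hFP', hPI⟩
  · obtain ⟨i, hi⟩ := hI.1
    intro h
    rw [Set.eq_empty_iff_forall_notMem] at hPI
    exact hPI i ⟨h ▸ Set.mem_univ i, hi⟩
  · intro F₁ F₂ hF₁ hF₂ hPeq
    by_contra hcon
    push_neg at hcon
    obtain ⟨hne₁, hne₂⟩ := hcon
    have hPF₁ : P ⊆ F₁ := hPeq ▸ Set.inter_subset_left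
    have hPF₂ : P ⊆ F₂ := hPeq ▸ Set.inter_subset_right
    obtain ⟨a, haF₁, haP⟩ : ∃ a, a ∈ F₁ ∧ a ∉ P := by
      by_contra h; push_neg at h
      exact hne₁ (Set.Subset.antisymm hPF₁ h)
    obtain ⟨b, hbF₂, hbP⟩ : ∃ b, b ∈ F₂ ∧ b ∉ P := by
      by_contra h; push_neg at h
      exact hne₂ (Set.Subset.antisymm hPF₂ h)
    -- the extension by a must meet I
    have key : ∀ x : H, x ∉ P → ∃ y ∈ I, hH.imp x y ∈ P := by
      intro x hx
      by_contra h; push_neg at h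
      have hext : hH.ext P x ∈ S := by
        refine ⟨hH.ext_filter hPfil x, hFP'.trans (hH.subset_ext hPfil x), ?_⟩
        rw [Set.eq_empty_iff_forall_notMem]
        rintro y ⟨hy1, hy2⟩
        exact h y hy2 hy1
      have := hPmax _ hext (hH.subset_ext hPfil x)
      exact hx (this ▸ hH.self_mem_ext P hPfil x)
    obtain ⟨x, hxI, haxP⟩ := key a haP
    obtain ⟨y, hyI, hbyP⟩ := key b hbP
    obtain ⟨c, hcI, hxc, hyc⟩ := hI.2.2 x y hxI hyI
    have hacP : hH.imp a c ∈ P :=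
      hH.filter_mp hPfil haxP (hH.mem_of_eq_one hPfil (hH.imp_mono hxc))
    have hbcP : hH.imp b c ∈ P :=
      hH.filter_mp hPfil hbyP (hH.mem_of_eq_one hPfil (hH.imp_mono hyc))
    have hcF₁ : c ∈ F₁ := hF₁.2 a c haF₁ (hPF₁ hacP)
    have hcF₂ : c ∈ F₂ := hF₂.2 b c hbF₂ (hPF₂ hbcP)
    have hcP : c ∈ P := hPeq ▸ ⟨hcF₁, hcF₂⟩
    rw [Set.eq_empty_iff_forall_notMem] at hPI
    exact hPI c ⟨hcP, hcI⟩
end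

section
/- Let H be a Hilbert algebra, F an implicative filter of H, and a ∈ H with a ∉ F. Then there exists an irreducible implicative filter P of H such that F ⊆ P and a ∉ P. -/
theorem stmt_2 {H : Type*} (hH : HilbertAlgebra H) (F : Set H)
    (hF : hH.IsImplicativeFilter F) (a : H) (ha : a ∉ F) :
    ∃ P : Set H, hH.IsIrreducible P ∧ F ⊆ P ∧ a ∉ P := by

  have hchainub : ∀ c ⊆ {G : Set H | hH.IsImplicativeFilter G ∧ a ∉ G},
      IsChain (· ⊆ ·) c → c.Nonempty →
      ∃ ub ∈ {G : Set H | hH.IsImplicativeFilter G ∧ a ∉ G}, ∀ s ∈ c, s ⊆ ub := by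
    intro c hcS hchain hcne
    refine ⟨⋃₀ c, ⟨⟨?_, ?_⟩, ?_⟩, fun s hs => Set.subset_sUnion_of_mem hs⟩
    · obtain ⟨G, hG⟩ := hcne
      exact ⟨G, hG, (hcS hG).1.1⟩
    · rintro x y ⟨G₁, hG₁, hx⟩ ⟨G₂, hG₂, hxy⟩
      rcases hchain.total hG₁ hG₂ with h | h
      · exact ⟨G₂, hG₂, (hcS hG₂).1.2 x y (h hx) hxy⟩
      · exact ⟨G₁, hG₁, (hcS hG₁).1.2 x y hx (h hxy)⟩
    · rintro ⟨G, hG, haG⟩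
      exact (hcS hG).2 haG
  obtain ⟨P, hFP, hPmax⟩ := zorn_subset_nonempty
    {G : Set H | hH.IsImplicativeFilter G ∧ a ∉ G} hchainub F ⟨hF, ha⟩
  refine ⟨P, ⟨hPmax.prop.1, ?_, ?_⟩, hFP, hPmax.prop.2⟩
  · intro hPu
    exact hPmax.prop.2 (hPu ▸ Set.mem_univ a)
  · intro F₁ F₂ h₁ h₂ hP
    by_contra hc
    push_neg at hc
    obtain ⟨hne1, hne2⟩ := hc
    have hsub1 : P ⊆ F₁ := hP ▸ Set.inter_subset_left
    have hsub2 : P ⊆ F₂ := hP ▸ Set.inter_subset_right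
    have ha1 : a ∈ F₁ := by
      by_contra haF
      exact hne1 (Set.Subset.antisymm hsub1 (hPmax.2 ⟨h₁, haF⟩ hsub1))
    have ha2 : a ∈ F₂ := by
      by_contra haF
      exact hne2 (Set.Subset.antisymm hsub2 (hPmax.2 ⟨h₂, haF⟩ hsub2))
    exact hPmax.prop.2 (hP ▸ ⟨ha1, ha2⟩)
end

section
/- Let f : H → G be a homomorphism of Hilbert algebras, P an irreducible implicative filter of G, and a ∈ H. Then f(a) ∈ P if and only if a ∈ Q for every irreducible implicative filter Q of H with f⁻¹(P) ⊆ Q. -/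
theorem stmt_6 {H G : Type*} (hH : HilbertAlgebra H) (hG : HilbertAlgebra G) (f : H → G)
    (hf : hH.IsHom hG f) (P : Set G) (hP : hG.IsIrreducible P) (a : H) :
    f a ∈ P ↔ ∀ Q : Set H, hH.IsIrreducible Q → f ⁻¹' P ⊆ Q → a ∈ Q := by
  constructor
  · intro hfa Q _ hsub
    exact hsub hfa
  · intro h
    by_contra hfa
    have hFilt : hH.IsImplicativeFilter (f ⁻¹' P) := by
      refine ⟨?_, ?_⟩
      · show f hH.one ∈ P
        rw [hf.1]; exact hP.1.1
      · intro x y hx hxy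
        exact hP.1.2 (f x) (f y) hx (by rw [← hf.2]; exact hxy)
    set S : Set (Set H) := {Q | hH.IsImplicativeFilter Q ∧ f ⁻¹' P ⊆ Q ∧ a ∉ Q} with hS
    have hFS : f ⁻¹' P ∈ S := ⟨hFilt, subset_rfl, hfa⟩
    have hchain : ∀ c ⊆ S, IsChain (· ⊆ ·) c → c.Nonempty →
        ∃ ub ∈ S, ∀ s ∈ c, s ⊆ ub := by
      intro c hcS hchain ⟨Q0, hQ0⟩
      refine ⟨⋃₀ c, ⟨⟨?_, ?_⟩, ?_, ?_⟩, fun s hs => Set.subset_sUnion_of_mem hs⟩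
      · exact ⟨Q0, hQ0, (hcS hQ0).1.1⟩
      · rintro x y ⟨Q1, hQ1, hx⟩ ⟨Q2, hQ2, hxy⟩
        rcases hchain.total hQ1 hQ2 with hle | hle
        · exact ⟨Q2, hQ2, (hcS hQ2).1.2 x y (hle hx) hxy⟩
        · exact ⟨Q1, hQ1, (hcS hQ1).1.2 x y hx (hle hxy)⟩
      · exact (hcS hQ0).2.1.trans (Set.subset_sUnion_of_mem hQ0)
      · rintro ⟨Q1, hQ1, ha⟩
        exact (hcS hQ1).2.2 ha
    obtain ⟨Q, -, hQmax⟩ := zorn_subset_nonempty S hchain _ hFS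
    have hQS : Q ∈ S := hQmax.prop
    have hirr : hH.IsIrreducible Q := by
      refine ⟨hQS.1, ?_, ?_⟩
      · intro heq
        exact hQS.2.2 (heq ▸ Set.mem_univ a)
      · intro F₁ F₂ hF₁ hF₂ hQeq
        by_contra hcon
        push_neg at hcon
        have key : ∀ F : Set H, hH.IsImplicativeFilter F → Q ≠ F → Q ⊆ F → a ∈ F := by
          intro F hF hne hsub
          by_contra haF
          exact hne (Set.Subset.antisymm hsub (hQmax.2 ⟨hF, hQS.2.1.trans hsub, haF⟩ hsub))
        have ha1 : a ∈ F₁ := key F₁ hF₁ hcon.1 (hQeq ▸ Set.inter_subset_left)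
        have ha2 : a ∈ F₂ := key F₂ hF₂ hcon.2 (hQeq ▸ Set.inter_subset_right)
        exact hQS.2.2 (hQeq ▸ ⟨ha1, ha2⟩)
    exact hQS.2.2 (h Q hirr hQS.2.1)
end

section
/- Let H be a Hilbert algebra and a₁,…,aₙ,b ∈ H (n ≥ 1). Then (φ(a₁) ∩ ⋯ ∩ φ(aₙ)) ⇒ φ(b) = φ(a₁→(a₂→⋯(aₙ→b)⋯)). Consequently, the collection FC(H) of all finite nonempty intersections of sets φ(a) is closed under the operation ⇒, and hence (FC(H), ∩, ⇒, X(H)) is an implicative semilattice. -/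
/-!
In a Hilbert algebra the filter generated by `F ∪ {a₁, …, aₙ}` is
`{b | a₁ → (⋯ → (aₙ → b)) ∈ F}` (deduction theorem). Hence if `a₁ → ⋯ → aₙ → b ∉ P`, the filter
generated by `P ∪ {a₁, …, aₙ}` misses `b`, and a Zorn argument extends it to an irreducible
filter `Q ⊇ P` containing every `aᵢ` but not `b`; so `P ∉ (φ a₁ ∩ ⋯ ∩ φ aₙ) ⇒ φ b`. The
converse inclusion is iterated modus ponens. Since `U ⇒ (V₁ ∩ V₂) = (U ⇒ V₁) ∩ (U ⇒ V₂)`,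
this makes `FC(H)` closed under `⇒`, and residuation holds for any upsets of `X(H)`.
-/

namespace HilbertAlgebra

variable {H : Type*} (hH : HilbertAlgebra H)

lemma eq_one_of_one_imp_eq_one {a : H} (h : hH.imp hH.one a = hH.one) : a = hH.one := by
  have h' := hH.ax1 a hH.one
  rw [h] at h'
  exact hH.ax3 a hH.one h' h

namespace IsImplicativeFilter

variable {hH} {F : Set H}

lemma preimage_imp (hF : hH.IsImplicativeFilter F) (x : H) :
    hH.IsImplicativeFilter (hH.imp x ⁻¹' F) := by
  refine ⟨by simpa only [Set.mem_preimage, hH.imp_one] using hF.1, fun a b ha hab => ?_⟩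
  exact hF.2 _ _ ha (hF.2 _ _ hab (hH.ax2 x a b ▸ hF.1))

lemma subset_preimage_imp (hF : hH.IsImplicativeFilter F) (x : H) : F ⊆ hH.imp x ⁻¹' F :=
  fun b hb => hF.2 b _ hb (hH.ax1 b x ▸ hF.1)

lemma mem_preimage_imp_self (hF : hH.IsImplicativeFilter F) (x : H) : x ∈ hH.imp x ⁻¹' F := by
  simpa only [Set.mem_preimage, hH.imp_self] using hF.1

lemma preimage_foldr_imp (hF : hH.IsImplicativeFilter F) (l : List H) :
    hH.IsImplicativeFilter ((fun b => l.foldr hH.imp b) ⁻¹' F) := by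
  induction l generalizing F with
  | nil => exact hF
  | cons x t ih => exact ih (hF.preimage_imp x)

lemma subset_preimage_foldr_imp (hF : hH.IsImplicativeFilter F) (l : List H) :
    F ⊆ (fun b => l.foldr hH.imp b) ⁻¹' F := by
  induction l generalizing F with
  | nil => exact subset_rfl
  | cons x t ih => exact (hF.subset_preimage_imp x).trans (ih (hF.preimage_imp x))

lemma mem_preimage_foldr_imp_of_mem (hF : hH.IsImplicativeFilter F) {l : List H} {a : H}
    (ha : a ∈ l) : a ∈ (fun b => l.foldr hH.imp b) ⁻¹' F := by
  induction l generalizing F with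
  | nil => cases ha
  | cons x t ih =>
    rcases List.mem_cons.1 ha with rfl | ha
    · exact hF.preimage_imp a |>.subset_preimage_foldr_imp t (hF.mem_preimage_imp_self a)
    · exact ih (hF.preimage_imp x) ha

lemma mem_of_foldr_imp_mem (hF : hH.IsImplicativeFilter F) {l : List H} (hl : ∀ a ∈ l, a ∈ F)
    {b : H} (hb : l.foldr hH.imp b ∈ F) : b ∈ F := by
  induction l with
  | nil => exact hb
  | cons x t ih =>
    exact ih (fun a ha => hl a (.tail x ha)) (hF.2 x _ (hl x List.mem_cons_self) hb)

lemma sUnion_of_isChain {c : Set (Set H)} (hc : ∀ G ∈ c, hH.IsImplicativeFilter G)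
    (hchain : IsChain (· ⊆ ·) c) (hne : c.Nonempty) : hH.IsImplicativeFilter (⋃₀ c) := by
  obtain ⟨G₀, hG₀⟩ := hne
  refine ⟨⟨G₀, hG₀, (hc G₀ hG₀).1⟩, ?_⟩
  rintro a b ⟨G₁, hG₁, ha⟩ ⟨G₂, hG₂, hab⟩
  obtain ⟨G, hG, h₁, h₂⟩ := hchain.directedOn G₁ hG₁ G₂ hG₂
  exact ⟨G, hG, (hc G hG).2 a b (h₁ ha) (h₂ hab)⟩

end IsImplicativeFilter

/-- A filter maximal among those avoiding `b` is irreducible: in a decomposition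
`M = F₁ ∩ F₂` with both `Fᵢ ⊋ M`, maximality puts `b` in both `Fᵢ`, hence in `M`. -/
lemma isIrreducible_of_maximal_not_mem {b : H} {M : Set H}
    (hM : Maximal (fun G => hH.IsImplicativeFilter G ∧ b ∉ G) M) : hH.IsIrreducible M := by
  obtain ⟨⟨hMf, hbM⟩, hmax⟩ := hM
  refine ⟨hMf, fun h => hbM (h ▸ Set.mem_univ b), fun F₁ F₂ h₁ h₂ hM => ?_⟩
  by_contra! hne
  have hb : ∀ G, hH.IsImplicativeFilter G → M ⊆ G → M ≠ G → b ∈ G := fun G hG hMG hne =>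
    by_contra fun hbG => hne (subset_antisymm hMG (hmax ⟨hG, hbG⟩ hMG))
  exact hbM (hM ▸ ⟨hb F₁ h₁ (hM ▸ Set.inter_subset_left) hne.1,
    hb F₂ h₂ (hM ▸ Set.inter_subset_right) hne.2⟩)

lemma exists_isIrreducible_superset_not_mem {F : Set H} (hF : hH.IsImplicativeFilter F)
    {b : H} (hb : b ∉ F) : ∃ P, hH.IsIrreducible P ∧ F ⊆ P ∧ b ∉ P := by
  let S : Set (Set H) := {G | hH.IsImplicativeFilter G ∧ b ∉ G}
  have hchain : ∀ c ⊆ S, IsChain (· ⊆ ·) c → c.Nonempty → ∃ ub ∈ S, ∀ G ∈ c, G ⊆ ub :=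
    fun c hcS hc hne => ⟨⋃₀ c, ⟨.sUnion_of_isChain (fun G hG => (hcS hG).1) hc hne,
      fun ⟨G, hG, hbG⟩ => (hcS hG).2 hbG⟩, fun _ => Set.subset_sUnion_of_mem⟩
  obtain ⟨M, hFM, hM⟩ := zorn_subset_nonempty S hchain F ⟨hF, hb⟩
  exact ⟨M, hH.isIrreducible_of_maximal_not_mem hM, hFM, hM.1.2⟩

lemma impUps_biInter_phi (l : List H) (b : H) :
    hH.impUps (⋂ a ∈ l, hH.phi a) (hH.phi b) = hH.phi (l.foldr hH.imp b) := by
  ext P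
  simp only [impUps, phi, Set.mem_iInter, Set.mem_ofPred_eq]
  refine ⟨fun ⟨hP, hPimp⟩ => ⟨hP, by_contra fun hb => ?_⟩, fun ⟨hP, hb⟩ => ⟨hP, ?_⟩⟩
  · obtain ⟨Q, hQ, hPQ, hbQ⟩ := hH.exists_isIrreducible_superset_not_mem
      (hP.1.preimage_foldr_imp l) hb
    exact hbQ (hPimp Q hQ ((hP.1.subset_preimage_foldr_imp l).trans hPQ)
      fun a ha => ⟨hQ, hPQ (hP.1.mem_preimage_foldr_imp_of_mem ha)⟩).2
  · exact fun Q hQ hPQ hQa => ⟨hQ, hQ.1.mem_of_foldr_imp_mem (fun a ha => (hQa a ha).2) (hPQ hb)⟩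

lemma impUps_biInter {ι : Type*} (U : Set (Set H)) {l : List ι} (hl : l ≠ [])
    (V : ι → Set (Set H)) : hH.impUps U (⋂ i ∈ l, V i) = ⋂ i ∈ l, hH.impUps U (V i) := by
  ext P
  simp only [impUps, Set.mem_iInter, Set.mem_ofPred_eq]
  obtain ⟨i₀, hi₀⟩ := List.exists_mem_of_ne_nil l hl
  exact ⟨fun ⟨hP, h⟩ i hi => ⟨hP, fun Q hQ hPQ hQU => h Q hQ hPQ hQU i hi⟩,
    fun h => ⟨(h i₀ hi₀).1, fun Q hQ hPQ hQU i hi => (h i hi).2 Q hQ hPQ hQU⟩⟩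

lemma isUpsetX_of_mem_FC {U : Set (Set H)} (hU : U ∈ hH.FC) : hH.IsUpsetX U := by
  obtain ⟨l, hl, rfl⟩ := hU
  obtain ⟨a, ha⟩ := List.exists_mem_of_ne_nil l hl
  simp only [IsUpsetX, phi, Set.mem_iInter, Set.mem_ofPred_eq]
  exact ⟨fun P hP => (hP a ha).1, fun P Q hP hQ hPQ b hb => ⟨hQ, hPQ (hP b hb).2⟩⟩

lemma inter_subset_iff_subset_impUps {U : Set (Set H)} (hU : hH.IsUpsetX U)
    (V W : Set (Set H)) : U ∩ V ⊆ W ↔ U ⊆ hH.impUps V W :=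
  ⟨fun h P hP => ⟨hU.1 P hP, fun Q hQ hPQ hQV => h ⟨hU.2 P Q hP hQ hPQ, hQV⟩⟩,
    fun h P ⟨hPU, hPV⟩ => (h hPU).2 P (hU.1 P hPU) subset_rfl hPV⟩

end HilbertAlgebra

theorem stmt_8 {H : Type*} (hH : HilbertAlgebra H) :
    (∀ (l : List H) (b : H), l ≠ [] →
      hH.impUps (⋂ a ∈ l, hH.phi a) (hH.phi b) = hH.phi (l.foldr hH.imp b)) ∧
    (∀ U V : Set (Set H), U ∈ hH.FC → V ∈ hH.FC → hH.impUps U V ∈ hH.FC) ∧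
    (∀ U V : Set (Set H), U ∈ hH.FC → V ∈ hH.FC → U ∩ V ∈ hH.FC) ∧
    ({P : Set H | hH.IsIrreducible P} ∈ hH.FC) ∧
    (∀ U V W : Set (Set H), U ∈ hH.FC → V ∈ hH.FC → W ∈ hH.FC →
      (U ∩ V ⊆ W ↔ U ⊆ hH.impUps V W)) := by
  refine ⟨fun l b _ => hH.impUps_biInter_phi l b, ?_, ?_, ?_, ?_⟩
  · rintro _ _ ⟨lU, -, rfl⟩ ⟨lV, hlV, rfl⟩
    refine ⟨lV.map (lU.foldr hH.imp), by simpa using hlV, ?_⟩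
    rw [hH.impUps_biInter _ hlV]
    simp [hH.impUps_biInter_phi]
  · rintro _ _ ⟨lU, hlU, rfl⟩ ⟨lV, -, rfl⟩
    exact ⟨lU ++ lV, by simp [hlU], by simp [Set.iInter_or, Set.iInter_inter_distrib]⟩
  · refine ⟨[hH.one], by simp, ?_⟩
    ext P
    simp only [Set.mem_ofPred_eq, List.mem_singleton, Set.iInter_iInter_eq_left, HilbertAlgebra.phi]
    exact ⟨fun h => ⟨h, h.1.1⟩, And.left⟩
  · exact fun U V W hU _ _ => hH.inter_subset_iff_subset_impUps (hH.isUpsetX_of_mem_FC hU) V W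
end

section
/- Let f : H → G be a morphism of Hilbert algebras with supremum and let P be an irreducible implicative filter of G. Then either f⁻¹(P) is an irreducible implicative filter of H or f⁻¹(P) = H. -/
namespace HilbertSupAux

variable {H : Type*} (h : HilbertSup H)

lemma le_refl (a : H) : h.imp a a = h.one :=
  (h.imp_eq_one_iff a a).mpr (h.sup_idem a)

lemma le_one (a : H) : h.imp a h.one = h.one :=
  (h.imp_eq_one_iff a h.one).mpr (h.sup_one a)

lemma eq_one {w : H} (hw : h.imp h.one w = h.one) : w = h.one :=
  h.ax3 w h.one (le_one h w) hw

lemma mp {a b : H} (hab : h.imp a b = h.one) (ha : a = h.one) : b = h.one := by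
  subst ha; exact eq_one h hab

lemma le_trans {a b c : H} (hab : h.imp a b = h.one) (hbc : h.imp b c = h.one) :
    h.imp a c = h.one := by
  rw [h.imp_eq_one_iff] at *
  rw [← hbc, ← h.sup_assoc, hab]

lemma lemT (a b : H) : h.imp a (h.imp (h.imp a b) b) = h.one := by
  have h1 : h.imp (h.imp (h.imp a b) a) (h.imp (h.imp a b) b) = h.one :=
    mp h (h.ax2 (h.imp a b) a b) (le_refl h _)
  exact le_trans h (h.ax1 a (h.imp a b)) h1

lemma mono2 {a b : H} (c : H) (hab : h.imp a b = h.one) :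
    h.imp (h.imp c a) (h.imp c b) = h.one := by
  have h1 := h.ax2 c a b
  rw [hab] at h1
  exact mp h h1 (le_one h c)

lemma sup_le {a b c : H} (hac : h.imp a c = h.one) (hbc : h.imp b c = h.one) :
    h.imp (h.sup a b) c = h.one := by
  rw [h.imp_eq_one_iff] at *
  rw [h.sup_assoc, hbc, hac]

lemma le_sup_left (a b : H) : h.imp a (h.sup a b) = h.one := by
  rw [h.imp_eq_one_iff, ← h.sup_assoc, h.sup_idem]

lemma le_sup_right (a b : H) : h.imp b (h.sup a b) = h.one := by
  rw [h.imp_eq_one_iff, h.sup_comm a b, ← h.sup_assoc, h.sup_idem]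

lemma filter_mem_of_le {F : Set H} (hF : h.toHilbertAlgebra.IsImplicativeFilter F)
    {a b : H} (ha : a ∈ F) (hab : h.imp a b = h.one) : b ∈ F :=
  hF.2 a b ha (hab ▸ hF.1)

/-- Irreducible implicative filters in a Hilbert algebra with supremum are prime. -/
lemma prime {P : Set H} (hP : h.toHilbertAlgebra.IsIrreducible P) {x y : H}
    (hxy : h.sup x y ∈ P) : x ∈ P ∨ y ∈ P := by
  by_contra hcon
  push_neg at hcon
  obtain ⟨hx, hy⟩ := hcon
  set F₁ : Set H := {z | h.imp x z ∈ P} with hF₁def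
  set F₂ : Set H := {z | h.imp y z ∈ P} with hF₂def
  have hPf : h.toHilbertAlgebra.IsImplicativeFilter P := hP.1
  have hfil : ∀ w : H, h.toHilbertAlgebra.IsImplicativeFilter {z | h.imp w z ∈ P} := by
    intro w
    constructor
    · show h.imp w h.one ∈ P
      rw [le_one h w]; exact hPf.1
    · intro a b ha hab
      have h1 : h.imp (h.imp w a) (h.imp w b) ∈ P :=
        hPf.2 _ _ hab (h.ax2 w a b ▸ hPf.1)
      exact hPf.2 _ _ ha h1
  have hsub : ∀ w : H, P ⊆ {z | h.imp w z ∈ P} := by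
    intro w z hz
    exact hPf.2 z (h.imp w z) hz (h.ax1 z w ▸ hPf.1)
  have hPeq : P = F₁ ∩ F₂ := by
    apply Set.Subset.antisymm
    · exact Set.subset_inter (hsub x) (hsub y)
    · rintro z ⟨hz1, hz2⟩
      -- hz1 : h.imp x z ∈ P, hz2 : h.imp y z ∈ P
      set t : H := h.imp (h.imp x z) (h.imp (h.imp y z) z) with ht
      have hxt : h.imp x t = h.one := by
        have h1 : h.imp x (h.imp (h.imp x z) z) = h.one := lemT h x z
        have h2 : h.imp (h.imp (h.imp x z) z) t = h.one :=
          mono2 h (h.imp x z) (h.ax1 z (h.imp y z))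
        exact le_trans h h1 h2
      have hyt : h.imp y t = h.one := by
        have h1 : h.imp y (h.imp (h.imp y z) z) = h.one := lemT h y z
        have h2 : h.imp (h.imp (h.imp y z) z) t = h.one :=
          h.ax1 (h.imp (h.imp y z) z) (h.imp x z)
        exact le_trans h h1 h2
      have hst : t ∈ P :=
        filter_mem_of_le h hPf hxy (sup_le h hxt hyt)
      have h3 : h.imp (h.imp y z) z ∈ P := hPf.2 _ _ hz1 hst
      exact hPf.2 _ _ hz2 h3
  rcases hP.2.2 F₁ F₂ (hfil x) (hfil y) hPeq with hc | hc
  · exact hx (hc ▸ (show x ∈ F₁ from show h.imp x x ∈ P from (le_refl h x).symm ▸ hPf.1))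
  · exact hy (hc ▸ (show y ∈ F₂ from show h.imp y y ∈ P from (le_refl h y).symm ▸ hPf.1))

end HilbertSupAux

theorem stmt_10 {H G : Type*} (hH : HilbertSup H) (hG : HilbertSup G) (f : H → G)
    (hf : hH.IsHomSup hG f) (P : Set G) (hP : hG.toHilbertAlgebra.IsIrreducible P) :
    hH.toHilbertAlgebra.IsIrreducible (f ⁻¹' P) ∨ f ⁻¹' P = Set.univ := by
  obtain ⟨⟨f1, fimp⟩, fsup⟩ := hf
  have hPf : hG.toHilbertAlgebra.IsImplicativeFilter P := hP.1
  by_cases huniv : f ⁻¹' P = Set.univ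
  · right; exact huniv
  left
  have hFfil : hH.toHilbertAlgebra.IsImplicativeFilter (f ⁻¹' P) := by
    constructor
    · show f hH.one ∈ P
      rw [f1]; exact hPf.1
    · intro a b ha hab
      have hab' : hG.imp (f a) (f b) ∈ P := by
        rw [← fimp]; exact hab
      exact hPf.2 (f a) (f b) ha hab'
  refine ⟨hFfil, huniv, ?_⟩
  intro F₁ F₂ hF1 hF2 heq
  by_contra hcon
  push_neg at hcon
  obtain ⟨hne1, hne2⟩ := hcon
  have hsub1 : f ⁻¹' P ⊆ F₁ := heq ▸ Set.inter_subset_left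
  have hsub2 : f ⁻¹' P ⊆ F₂ := heq ▸ Set.inter_subset_right
  obtain ⟨a, ha1, ha⟩ : ∃ a, a ∈ F₁ ∧ a ∉ f ⁻¹' P := by
    by_contra hc
    push_neg at hc
    exact hne1 (Set.Subset.antisymm hsub1 (fun z hz => by_contra fun hz' => (hz' (hc z hz))))
  obtain ⟨b, hb2, hb⟩ : ∃ b, b ∈ F₂ ∧ b ∉ f ⁻¹' P := by
    by_contra hc
    push_neg at hc
    exact hne2 (Set.Subset.antisymm hsub2 (fun z hz => by_contra fun hz' => (hz' (hc z hz))))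
  have hab1 : hH.sup a b ∈ F₁ :=
    HilbertSupAux.filter_mem_of_le hH hF1 ha1 (HilbertSupAux.le_sup_left hH a b)
  have hab2 : hH.sup a b ∈ F₂ :=
    HilbertSupAux.filter_mem_of_le hH hF2 hb2 (HilbertSupAux.le_sup_right hH a b)
  have habF : hH.sup a b ∈ f ⁻¹' P := heq ▸ Set.mem_inter hab1 hab2
  have hsupP : hG.sup (f a) (f b) ∈ P := by
    rw [← fsup]; exact habF
  rcases HilbertSupAux.prime hG hP hsupP with hc | hc
  · exact ha hc
  · exact hb hc
end

section
/- Let f : H → G be a morphism of Hilbert algebras with supremum, P an irreducible implicative filter of G, and U, V upsets of X(H). If R_f(P) ⊆ U ∪ V, then R_f(P) ⊆ U or R_f(P) ⊆ V, where R_f(P) = {Q ∈ X(H) : f⁻¹(P) ⊆ Q}. -/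
namespace HilbertSup

variable {H : Type*} (h : HilbertSup H)

lemma imp_one' (a : H) : h.imp a h.one = h.one :=
  (h.imp_eq_one_iff a h.one).2 (h.sup_one a)

lemma le_self' (a : H) : h.imp a a = h.one :=
  (h.imp_eq_one_iff a a).2 (h.sup_idem a)

lemma mp' {s t : H} (h1 : h.imp s t = h.one) (h2 : s = h.one) : t = h.one := by
  subst h2
  exact h.ax3 t h.one (h.imp_one' t) h1

lemma le_trans' {a b c : H} (h1 : h.imp a b = h.one) (h2 : h.imp b c = h.one) :
    h.imp a c = h.one := by
  rw [h.imp_eq_one_iff] at h1 h2 ⊢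
  rw [← h2, ← h.sup_assoc, h1]

lemma imp_mono_right {a b c : H} (hbc : h.imp b c = h.one) :
    h.imp (h.imp a b) (h.imp a c) = h.one := by
  have h1 : h.imp a (h.imp b c) = h.one := by rw [hbc]; exact h.imp_one' a
  exact h.mp' (h.ax2 a b c) h1

lemma exchange' {c d e : H} (h1 : h.imp c (h.imp d e) = h.one) :
    h.imp d (h.imp c e) = h.one := by
  have h2 : h.imp (h.imp c d) (h.imp c e) = h.one := h.mp' (h.ax2 c d e) h1
  exact h.le_trans' (h.ax1 d c) h2

lemma le_imp_imp (a x : H) : h.imp a (h.imp (h.imp a x) x) = h.one :=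
  h.exchange' (h.le_self' (h.imp a x))

lemma sup_lub {a b c : H} (h1 : h.imp a c = h.one) (h2 : h.imp b c = h.one) :
    h.imp (h.sup a b) c = h.one := by
  rw [h.imp_eq_one_iff] at h1 h2 ⊢
  rw [h.sup_assoc, h2, h1]

lemma le_sup_left' (a b : H) : h.imp a (h.sup a b) = h.one := by
  rw [h.imp_eq_one_iff, ← h.sup_assoc, h.sup_idem]

lemma le_sup_right' (a b : H) : h.imp b (h.sup a b) = h.one := by
  rw [h.imp_eq_one_iff, h.sup_comm a b, ← h.sup_assoc, h.sup_idem]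

/-- In a Hilbert algebra with supremum, irreducible implicative filters are sup-prime. -/
lemma prime_of_irreducible {P : Set H} (hP : h.toHilbertAlgebra.IsIrreducible P)
    {a b : H} (hab : h.sup a b ∈ P) : a ∈ P ∨ b ∈ P := by
  by_contra hc
  push_neg at hc
  obtain ⟨ha, hb⟩ := hc
  obtain ⟨⟨h1P, hMP⟩, hne, hirr⟩ := hP
  -- filters generated by P and a single element
  have hfil : ∀ c : H, h.toHilbertAlgebra.IsImplicativeFilter {x : H | h.imp c x ∈ P} := by
    intro c
    constructor
    · show h.imp c h.one ∈ P
      rw [h.imp_one' c]; exact h1P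
    · intro x y hx hxy
      have hax2 : h.imp (h.imp c (h.imp x y)) (h.imp (h.imp c x) (h.imp c y)) ∈ P := by
        rw [h.ax2]; exact h1P
      exact hMP _ _ hx (hMP _ _ hxy hax2)
  have hPeq : P = {x : H | h.imp a x ∈ P} ∩ {x : H | h.imp b x ∈ P} := by
    apply Set.Subset.antisymm
    · intro x hx
      constructor
      · exact hMP _ _ hx (by rw [h.ax1]; exact h1P)
      · exact hMP _ _ hx (by rw [h.ax1]; exact h1P)
    · rintro x ⟨hxa, hxb⟩
      set ya := h.imp a x with hya
      set yb := h.imp b x with hyb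
      have haw : h.imp a (h.imp ya (h.imp yb x)) = h.one := by
        refine h.le_trans' (h.le_imp_imp a x) ?_
        exact h.imp_mono_right (h.ax1 x yb)
      have hbw : h.imp b (h.imp ya (h.imp yb x)) = h.one := by
        refine h.le_trans' (h.le_imp_imp b x) ?_
        exact h.ax1 (h.imp yb x) ya
      have hsw : h.imp (h.sup a b) (h.imp ya (h.imp yb x)) = h.one := h.sup_lub haw hbw
      have hw : h.imp ya (h.imp yb x) ∈ P := hMP _ _ hab (by rw [hsw]; exact h1P)
      exact hMP _ _ hxb (hMP _ _ hxa hw)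
  rcases hirr _ _ (hfil a) (hfil b) hPeq with hPa | hPb
  · exact ha (by rw [hPa]; show h.imp a a ∈ P; rw [h.le_self']; exact h1P)
  · exact hb (by rw [hPb]; show h.imp b b ∈ P; rw [h.le_self']; exact h1P)

end HilbertSup

theorem stmt_11 {H G : Type*} (hH : HilbertSup H) (hG : HilbertSup G) (f : H → G)
    (hf : hH.IsHomSup hG f) (P : Set G) (hP : hG.toHilbertAlgebra.IsIrreducible P)
    (U V : Set (Set H)) (hU : hH.toHilbertAlgebra.IsUpsetX U)
    (hV : hH.toHilbertAlgebra.IsUpsetX V)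
    (hUV : {Q : Set H | hH.toHilbertAlgebra.IsIrreducible Q ∧ f ⁻¹' P ⊆ Q} ⊆ U ∪ V) :
    {Q : Set H | hH.toHilbertAlgebra.IsIrreducible Q ∧ f ⁻¹' P ⊆ Q} ⊆ U ∨
      {Q : Set H | hH.toHilbertAlgebra.IsIrreducible Q ∧ f ⁻¹' P ⊆ Q} ⊆ V := by
  by_contra hc
  push_neg at hc
  obtain ⟨hcU, hcV⟩ := hc
  obtain ⟨Q₁, hQ₁R, hQ₁U⟩ := Set.not_subset.mp hcU
  obtain ⟨Q₂, hQ₂R, hQ₂V⟩ := Set.not_subset.mp hcV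
  obtain ⟨⟨hf1, hfimp⟩, hfsup⟩ := hf
  have h1P := hP.1.1
  have hMP := hP.1.2
  -- f⁻¹(P) is an implicative filter
  have hF0fil : hH.toHilbertAlgebra.IsImplicativeFilter (f ⁻¹' P) := by
    constructor
    · show f hH.one ∈ P
      rw [hf1]; exact h1P
    · intro a b ha hab
      have : f (hH.toHilbertAlgebra.imp a b) ∈ P := hab
      rw [hfimp] at this
      exact hMP _ _ ha this
  -- f⁻¹(P) is proper
  have hF0ne : f ⁻¹' P ≠ Set.univ := by
    intro hEq
    have hsub : f ⁻¹' P ⊆ Q₁ := hQ₁R.2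
    have : Q₁ = Set.univ := Set.eq_univ_of_univ_subset (hEq ▸ hsub)
    exact hQ₁R.1.2.1 this
  -- f⁻¹(P) is irreducible
  have hF0irr : hH.toHilbertAlgebra.IsIrreducible (f ⁻¹' P) := by
    refine ⟨hF0fil, hF0ne, ?_⟩
    intro F₁ F₂ hF₁ hF₂ hEq
    by_contra hne
    push_neg at hne
    obtain ⟨hne1, hne2⟩ := hne
    have hsub1 : f ⁻¹' P ⊆ F₁ := hEq ▸ Set.inter_subset_left
    have hsub2 : f ⁻¹' P ⊆ F₂ := hEq ▸ Set.inter_subset_right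
    obtain ⟨a, haF₁, haF₀⟩ : ∃ a, a ∈ F₁ ∧ a ∉ f ⁻¹' P := by
      by_contra hcc
      push_neg at hcc
      exact hne1 (Set.Subset.antisymm hsub1 hcc)
    obtain ⟨b, hbF₂, hbF₀⟩ : ∃ b, b ∈ F₂ ∧ b ∉ f ⁻¹' P := by
      by_contra hcc
      push_neg at hcc
      exact hne2 (Set.Subset.antisymm hsub2 hcc)
    have hs1 : hH.sup a b ∈ F₁ :=
      hF₁.2 _ _ haF₁ (by rw [hH.le_sup_left']; exact hF₁.1)
    have hs2 : hH.sup a b ∈ F₂ :=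
      hF₂.2 _ _ hbF₂ (by rw [hH.le_sup_right']; exact hF₂.1)
    have hsP : hH.sup a b ∈ f ⁻¹' P := hEq ▸ ⟨hs1, hs2⟩
    have : hG.sup (f a) (f b) ∈ P := by
      rw [← hfsup]; exact hsP
    rcases hG.prime_of_irreducible hP this with hfa | hfb
    · exact haF₀ hfa
    · exact hbF₀ hfb
  -- f⁻¹(P) belongs to R_f(P), hence to U ∪ V
  have hF0R : f ⁻¹' P ∈ {Q : Set H | hH.toHilbertAlgebra.IsIrreducible Q ∧ f ⁻¹' P ⊆ Q} :=
    ⟨hF0irr, subset_rfl⟩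
  rcases hUV hF0R with hFU | hFV
  · exact hQ₁U (hU.2 _ _ hFU hQ₁R.1 hQ₁R.2)
  · exact hQ₂V (hV.2 _ _ hFV hQ₂R.1 hQ₂R.2)
end

section
/- Let H be a finite Hilbert algebra with supremum. Then every upset U of X(H) is a finite (possibly empty) union of sets belonging to FC(H), i.e., a finite union of finite nonempty intersections of sets of the form φ(a) with a ∈ H. -/
theorem stmt_12 {H : Type*} [Finite H] (hH : HilbertSup H) (U : Set (Set H))
    (hU : hH.toHilbertAlgebra.IsUpsetX U) :
    ∃ T : Set (Set (Set H)), T.Finite ∧ T ⊆ hH.toHilbertAlgebra.FC ∧ U = ⋃₀ T := by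
  classical
  set hA := hH.toHilbertAlgebra
  refine ⟨(fun P => ⋂ a ∈ P, hA.phi a) '' U, ?_, ?_, ?_⟩
  · exact Set.Finite.image _ (Set.toFinite U)
  · rintro V ⟨P, hPU, rfl⟩
    have hirr := hU.1 P hPU
    have hone : hA.one ∈ P := hirr.1.1
    have hfin : P.Finite := Set.toFinite P
    refine ⟨hfin.toFinset.toList, ?_, ?_⟩
    · intro h
      have : hA.one ∈ hfin.toFinset.toList := by
        simp [Finset.mem_toList, hfin.mem_toFinset, hone]
      simp [h] at this
    · ext Q
      simp [Finset.mem_toList, hfin.mem_toFinset]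
  · ext Q
    constructor
    · intro hQ
      refine ⟨_, ⟨Q, hQ, rfl⟩, ?_⟩
      simp only [Set.mem_iInter]
      intro a ha
      exact ⟨hU.1 Q hQ, ha⟩
    · rintro ⟨V, ⟨P, hPU, rfl⟩, hQV⟩
      simp only [Set.mem_iInter] at hQV
      have hirr := hU.1 P hPU
      have hone : hA.one ∈ P := hirr.1.1
      have hQirr : hA.IsIrreducible Q := (hQV _ hone).1
      exact hU.2 P Q hPU hQirr (fun a ha => (hQV a ha).2)
end

section
/- Let H be a Hilbert algebra with supremum. Then for all a₁,…,aₙ,b₁,…,bₙ ∈ H (n ≥ 1): (φ(a₁) ∩ ⋯ ∩ φ(aₙ)) ∪ (φ(b₁) ∩ ⋯ ∩ φ(bₙ)) = ⋂_{1 ≤ i,j ≤ n} φ(aᵢ ∨ bⱼ). Consequently FC(H) is closed under binary unions. -/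
/-!
Irreducible implicative filters are prime for `∨`: if `a ∨ b ∈ P`, then `P` is the intersection of
the filters `{x | a → x ∈ P}` and `{x | b → x ∈ P}`, which contain `a` and `b` respectively, so
irreducibility puts `a` or `b` in `P`. Hence `φ(a ∨ b) = φ(a) ∪ φ(b)`, and both claims follow from
the distributivity of `∪` over `∩`.
-/

namespace HilbertAlgebra

variable {H : Type*} (hH : HilbertAlgebra H)

lemma eq_one_of_one_imp {b : H} (h : hH.imp hH.one b = hH.one) : b = hH.one :=
  hH.ax3 b hH.one (by simpa only [h] using hH.ax1 b hH.one) h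

lemma imp_eq_one_trans {x y z : H} (hxy : hH.imp x y = hH.one) (hyz : hH.imp y z = hH.one) :
    hH.imp x z = hH.one := by
  have h := hH.ax2 x y z
  rw [hyz, hH.imp_one] at h
  have h' := hH.eq_one_of_one_imp h
  rw [hxy] at h'
  exact hH.eq_one_of_one_imp h'

lemma imp_imp_imp_eq_one (a b : H) : hH.imp a (hH.imp (hH.imp a b) b) = hH.one := by
  have h := hH.ax2 (hH.imp a b) a b
  rw [hH.imp_self] at h
  exact hH.imp_eq_one_trans (hH.ax1 a (hH.imp a b)) (hH.eq_one_of_one_imp h)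

lemma imp_mono_right {y z : H} (x : H) (h : hH.imp y z = hH.one) :
    hH.imp (hH.imp x y) (hH.imp x z) = hH.one := by
  simpa only [h, hH.imp_one, hH.one_imp] using hH.ax2 x y z

lemma imp_anti_left {x y : H} (z : H) (h : hH.imp x y = hH.one) :
    hH.imp (hH.imp y z) (hH.imp x z) = hH.one := by
  have h' := hH.ax2 x y z
  rw [h, hH.one_imp] at h'
  exact hH.imp_eq_one_trans (hH.ax1 (hH.imp y z) x) h'

lemma imp_left_comm (a b c : H) : hH.imp a (hH.imp b c) = hH.imp b (hH.imp a c) :=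
  hH.ax3 _ _ (hH.imp_eq_one_trans (hH.ax2 a b c) (hH.imp_anti_left _ (hH.ax1 b a)))
    (hH.imp_eq_one_trans (hH.ax2 b a c) (hH.imp_anti_left _ (hH.ax1 a b)))

namespace IsImplicativeFilter

variable {hH} {F : Set H}

lemma mem_of_imp_eq_one (hF : hH.IsImplicativeFilter F) {a b : H} (ha : a ∈ F)
    (h : hH.imp a b = hH.one) : b ∈ F :=
  hF.2 a b ha (h ▸ hF.1)

lemma setOf_imp_mem (hF : hH.IsImplicativeFilter F) (u : H) :
    hH.IsImplicativeFilter {x | hH.imp u x ∈ F} := by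
  refine ⟨by simpa only [Set.mem_ofPred_eq, hH.imp_one] using hF.1, fun x y hx hxy => ?_⟩
  exact hF.2 _ _ hx (hF.mem_of_imp_eq_one hxy (hH.ax2 u x y))

lemma subset_setOf_imp_mem (hF : hH.IsImplicativeFilter F) (u : H) :
    F ⊆ {x | hH.imp u x ∈ F} :=
  fun x hx => hF.mem_of_imp_eq_one hx (hH.ax1 x u)

lemma mem_setOf_imp_mem_self (hF : hH.IsImplicativeFilter F) (u : H) :
    u ∈ {x | hH.imp u x ∈ F} := by
  simpa only [Set.mem_ofPred_eq, hH.imp_self] using hF.1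

end IsImplicativeFilter

end HilbertAlgebra

namespace HilbertSup

variable {H : Type*} (hS : HilbertSup H)

lemma le_sup_left (a b : H) : hS.imp a (hS.sup a b) = hS.one := by
  rw [hS.imp_eq_one_iff, ← hS.sup_assoc, hS.sup_idem]

lemma le_sup_right (a b : H) : hS.imp b (hS.sup a b) = hS.one := by
  rw [hS.sup_comm a b]
  exact hS.le_sup_left b a

lemma sup_le {a b c : H} (hac : hS.imp a c = hS.one) (hbc : hS.imp b c = hS.one) :
    hS.imp (hS.sup a b) c = hS.one := by
  rw [hS.imp_eq_one_iff] at hac hbc ⊢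
  rw [hS.sup_assoc, hbc, hac]

lemma imp_imp_sup_imp_eq_one (a b c : H) :
    hS.imp (hS.imp a c) (hS.imp (hS.imp b c) (hS.imp (hS.sup a b) c)) = hS.one := by
  let h := hS.toHilbertAlgebra
  have ha : h.imp a (h.imp (h.imp a c) (h.imp (h.imp b c) c)) = h.one :=
    h.imp_eq_one_trans (h.imp_imp_imp_eq_one a c) (h.imp_mono_right _ (h.ax1 c (h.imp b c)))
  have hb : h.imp b (h.imp (h.imp a c) (h.imp (h.imp b c) c)) = h.one :=
    h.imp_eq_one_trans (h.imp_imp_imp_eq_one b c) (h.ax1 (h.imp (h.imp b c) c) (h.imp a c))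
  rw [h.imp_left_comm (h.imp b c), h.imp_left_comm (h.imp a c)]
  exact hS.sup_le ha hb

end HilbertSup

namespace HilbertAlgebra

variable {H : Type*} {hS : HilbertSup H} {P : Set H}

lemma IsImplicativeFilter.inter_setOf_imp_mem_of_sup_mem (hP : hS.IsImplicativeFilter P)
    {a b : H} (hab : hS.sup a b ∈ P) : {x | hS.imp a x ∈ P} ∩ {x | hS.imp b x ∈ P} = P := by
  refine subset_antisymm (fun x ⟨hax, hbx⟩ => ?_)
    (Set.subset_inter (hP.subset_setOf_imp_mem a) (hP.subset_setOf_imp_mem b))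
  have hbx_imp := hP.mem_of_imp_eq_one hax (hS.imp_imp_sup_imp_eq_one a b x)
  exact hP.2 _ _ hab (hP.2 _ _ hbx hbx_imp)

lemma IsIrreducible.mem_or_mem_of_sup_mem (hP : hS.IsIrreducible P) {a b : H}
    (hab : hS.sup a b ∈ P) : a ∈ P ∨ b ∈ P := by
  have hfilt := hP.1
  rcases hP.2.2 _ _ (hfilt.setOf_imp_mem a) (hfilt.setOf_imp_mem b)
      (hfilt.inter_setOf_imp_mem_of_sup_mem hab).symm with h | h
  · exact .inl (h ▸ hfilt.mem_setOf_imp_mem_self a)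
  · exact .inr (h ▸ hfilt.mem_setOf_imp_mem_self b)

end HilbertAlgebra

namespace HilbertSup

variable {H : Type*} (hS : HilbertSup H)

lemma phi_sup (a b : H) : hS.phi (hS.sup a b) = hS.phi a ∪ hS.phi b := by
  ext P
  constructor
  · rintro ⟨hP : hS.IsIrreducible P, hab⟩
    exact (hP.mem_or_mem_of_sup_mem hab).imp (⟨hP, ·⟩) (⟨hP, ·⟩)
  · rintro (⟨hP, ha⟩ | ⟨hP, hb⟩)
    · exact ⟨hP, hP.1.mem_of_imp_eq_one ha (hS.le_sup_left a b)⟩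
    · exact ⟨hP, hP.1.mem_of_imp_eq_one hb (hS.le_sup_right a b)⟩

end HilbertSup

lemma List.biInter_flatMap_map {α β γ δ : Type*} (l : List α) (m : List β) (f : α → β → γ)
    (s : γ → Set δ) :
    ⋂ c ∈ l.flatMap (fun x => m.map (f x)), s c = ⋂ x ∈ l, ⋂ y ∈ m, s (f x y) := by
  ext
  simp only [Set.mem_iInter, List.mem_flatMap, List.mem_map]
  grind

theorem stmt_13 {H : Type*} (hH : HilbertSup H) :
    (∀ (n : ℕ), 1 ≤ n → ∀ a b : Fin n → H,
      ((⋂ i, hH.toHilbertAlgebra.phi (a i)) ∪ (⋂ j, hH.toHilbertAlgebra.phi (b j))) =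
        ⋂ i, ⋂ j, hH.toHilbertAlgebra.phi (hH.sup (a i) (b j))) ∧
    (∀ U V : Set (Set H), U ∈ hH.toHilbertAlgebra.FC → V ∈ hH.toHilbertAlgebra.FC →
      U ∪ V ∈ hH.toHilbertAlgebra.FC) := by
  refine ⟨fun n _ a b => ?_, ?_⟩
  · simp only [Set.iInter_union_iInter, hH.phi_sup]
  · rintro U V ⟨l, hl, rfl⟩ ⟨m, hm, rfl⟩
    refine ⟨l.flatMap fun x => m.map (hH.sup x), ?_, ?_⟩
    · simpa [List.flatMap_eq_nil_iff, List.eq_nil_iff_forall_not_mem] using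
        ⟨l.exists_mem_of_ne_nil hl, m.exists_mem_of_ne_nil hm⟩
    · rw [List.biInter_flatMap_map, Set.iInter₂_union_iInter₂]
      simp only [hH.phi_sup]
end
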